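/- Define d n := b n · b (n+5) − b (n+2) · b (n+3). Then for every n ≥ 0, b (n+7) · d n = b (n+1) · d (n+3). -/

import Mathlib

/-!
Clearing the denominator of the recurrence gives `b (n+4) b n = b (n+3) b (n+1) - c (n+4) b (n+2)²`
as long as `b n ≠ 0`. Two instances of it show that `e n := d n - c n b (n+1) b (n+4)` satisfies
`b (n+2) e (n+1) = b (n+4) e n`; since `e 0 = 0`, `d n = c n b (n+1) b (n+4)`, and as `c` has
period 3 both sides of the claim equal `c n b (n+1) b (n+4) b (n+7)`.

The terms never vanish because each is a `5`-integral rational whose residue modulo `5` follows a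
nonzero pattern of period `24`, which one checks satisfies the recurrence in `ZMod 5`.
-/

/-- The ECHO sequence. -/
def echo : ℕ → ℚ
  | 0 => 1
  | 1 => 1
  | 2 => 2
  | 3 => 1
  | n + 4 =>
      (echo (n + 3) * echo (n + 1) - (if 3 ∣ (n + 4) then 3 else 1) * echo (n + 2) ^ 2) /
        echo n

/-- The derived sequence d. -/
def dseq (n : ℕ) : ℚ := echo n * echo (n + 5) - echo (n + 2) * echo (n + 3)

namespace Rat

variable {K : Type*} [Field K]

/-- For `K = ZMod p`: `q` lies in the localization `ℤ_(p)` and has residue `r`. -/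
def ReducesTo (q : ℚ) (r : K) : Prop := (q.den : K) ≠ 0 ∧ (q : K) = r

lemma natCast_ne_zero_of_dvd {m n : ℕ} (h : m ∣ n) (hn : (n : K) ≠ 0) : (m : K) ≠ 0 := by
  obtain ⟨k, rfl⟩ := h
  simp_all

namespace ReducesTo

variable {q s : ℚ} {r t : K}

lemma natCast (n : ℕ) : ReducesTo (n : ℚ) (n : K) := by
  simp [ReducesTo]

lemma mul (hq : ReducesTo q r) (hs : ReducesTo s t) : ReducesTo (q * s) (r * t) :=
  ⟨natCast_ne_zero_of_dvd (mul_den_dvd q s) (by push_cast; exact mul_ne_zero hq.1 hs.1),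
    by rw [cast_mul_of_ne_zero hq.1 hs.1, hq.2, hs.2]⟩

lemma sub (hq : ReducesTo q r) (hs : ReducesTo s t) : ReducesTo (q - s) (r - t) :=
  ⟨natCast_ne_zero_of_dvd (sub_den_dvd q s) (by push_cast; exact mul_ne_zero hq.1 hs.1),
    by rw [cast_sub_of_ne_zero hq.1 hs.1, hq.2, hs.2]⟩

lemma num_ne_zero (hq : ReducesTo q r) (hr : r ≠ 0) : (q.num : K) ≠ 0 := by
  intro h
  apply hr
  rw [← hq.2, cast_def, h, zero_div]

lemma ne_zero (hq : ReducesTo q r) (hr : r ≠ 0) : q ≠ 0 := by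
  rintro rfl
  exact hr (by simpa using hq.2.symm)

lemma inv (hq : ReducesTo q r) (hr : r ≠ 0) : ReducesTo q⁻¹ r⁻¹ := by
  have hnum := hq.num_ne_zero hr
  refine ⟨?_, by rw [cast_inv_of_ne_zero hnum, hq.2]⟩
  rw [den_inv_of_ne_zero (hq.ne_zero hr)]
  rcases Int.natAbs_eq q.num with h | h <;> rw [h] at hnum <;> simpa using hnum

lemma div (hq : ReducesTo q r) (hs : ReducesTo s t) (ht : t ≠ 0) : ReducesTo (q / s) (r / t) := by
  simpa only [div_eq_mul_inv] using hq.mul (hs.inv ht)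

end ReducesTo

end Rat

def echoCoeff (n : ℕ) : ℕ := if 3 ∣ n then 3 else 1

lemma echoCoeff_add_three (n : ℕ) : echoCoeff (n + 3) = echoCoeff n := by
  simp [echoCoeff]

lemma echo_add_four (n : ℕ) :
    echo (n + 4) =
      (echo (n + 3) * echo (n + 1) - echoCoeff (n + 4) * echo (n + 2) ^ 2) / echo n := by
  rw [echo, echoCoeff]
  push_cast
  rfl

instance fact_prime_five : Fact (Nat.Prime 5) := ⟨by norm_num⟩

def echoResidue (n : ℕ) : ZMod 5 :=
  ![1, 1, 2, 1, 2, 3, 3, 2, 1, 2, 1, 1, 4, 4, 3, 4, 3, 2, 2, 3, 4, 3, 4, 4]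
    ⟨n % 24, Nat.mod_lt _ (by norm_num)⟩

lemma echoResidue_mod (n : ℕ) : echoResidue (n % 24) = echoResidue n := by
  simp [echoResidue]

lemma echoResidue_ne_zero (n : ℕ) : echoResidue n ≠ 0 := by
  rw [echoResidue]
  generalize (⟨n % 24, _⟩ : Fin 24) = i
  revert i
  decide

lemma echoResidue_add_four (n : ℕ) :
    echoResidue (n + 4) * echoResidue n =
      echoResidue (n + 3) * echoResidue (n + 1) - echoCoeff (n + 4) * echoResidue (n + 2) ^ 2 := by
  have hperiod : ∀ k, echoResidue (n % 24 + k) = echoResidue (n + k) := fun k => by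
    rw [← echoResidue_mod, ← echoResidue_mod (n + k), Nat.add_mod, Nat.mod_mod, ← Nat.add_mod]
  have hcoeff : echoCoeff (n % 24 + 4) = echoCoeff (n + 4) := by
    simp only [echoCoeff]
    congr 1
    exact propext (by omega)
  have key : ∀ m < 24, echoResidue (m + 4) * echoResidue m =
      echoResidue (m + 3) * echoResidue (m + 1) - echoCoeff (m + 4) * echoResidue (m + 2) ^ 2 := by
    decide
  simpa only [hperiod, hcoeff, echoResidue_mod] using key (n % 24) (Nat.mod_lt _ (by norm_num))

theorem echo_reducesTo : ∀ n, (echo n).ReducesTo (echoResidue n)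
  | 0 | 1 | 2 | 3 => ⟨by simp [echo], by simp [echo, echoResidue]⟩
  | n + 4 => by
    have h := (((echo_reducesTo (n + 3)).mul (echo_reducesTo (n + 1))).sub
      ((Rat.ReducesTo.natCast (echoCoeff (n + 4))).mul
        ((echo_reducesTo (n + 2)).mul (echo_reducesTo (n + 2))))).div
      (echo_reducesTo n) (echoResidue_ne_zero n)
    rwa [← sq, ← sq, ← echoResidue_add_four,
      mul_div_cancel_right₀ _ (echoResidue_ne_zero n), ← echo_add_four] at h

lemma echo_ne_zero (n : ℕ) : echo n ≠ 0 :=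
  (echo_reducesTo n).ne_zero (echoResidue_ne_zero n)

lemma echo_add_four_mul (n : ℕ) :
    echo (n + 4) * echo n = echo (n + 3) * echo (n + 1) - echoCoeff (n + 4) * echo (n + 2) ^ 2 := by
  rw [echo_add_four, div_mul_cancel₀ _ (echo_ne_zero n)]

lemma echo_add_two_mul_dseq_succ_sub (n : ℕ) :
    echo (n + 2) * (dseq (n + 1) - echoCoeff (n + 1) * (echo (n + 2) * echo (n + 5))) =
      echo (n + 4) * (dseq n - echoCoeff n * (echo (n + 1) * echo (n + 4))) := by
  have h₀ := echo_add_four_mul n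
  have h₂ := echo_add_four_mul (n + 2)
  rw [show n + 4 = n + 1 + 3 by ring, echoCoeff_add_three] at h₀
  rw [show n + 2 + 4 = n + 3 + 3 by ring, echoCoeff_add_three, echoCoeff_add_three] at h₂
  simp only [dseq]
  linear_combination echo (n + 1) * h₂ - echo (n + 5) * h₀

lemma dseq_eq (n : ℕ) : dseq n = echoCoeff n * (echo (n + 1) * echo (n + 4)) := by
  induction n with
  | zero => norm_num [dseq, echo, echoCoeff]
  | succ n ih =>
    have h := echo_add_two_mul_dseq_succ_sub n
    rw [ih, sub_self, mul_zero, mul_eq_zero] at h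
    exact sub_eq_zero.mp (h.resolve_left (echo_ne_zero _))

/-- For every n, b (n+7) · d n = b (n+1) · d (n+3). -/
theorem echo_d_relation :
    ∀ n : ℕ, echo (n + 7) * dseq n = echo (n + 1) * dseq (n + 3) := by
  intro n
  rw [dseq_eq, dseq_eq, echoCoeff_add_three]
  ring
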